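/- arXiv:1403.1530 — 2 statements merged into one kernel-verified Lean document; each statement's English description precedes it below -/
import Mathlib

section
/- Let N ≥ 2, α ∈ (0,1), c > 0, and G(x,y) = c|x-y|^{-(N-2α)}. Then there exists a constant C > 0 such that for every Borel set E ⊂ ℝ^N and every y ∈ ℝ^N, ∫_E G(x,y) dω(x) ≤ C (∫_E dω)^{(p*-1)/p*}, where dω(x) = dx/(1+|x|^{N+2α}) and p* = N/(N-2α). -/
/-!
Split `E` at the ball `B(y, r)` with `r ^ N = ω(E)`. Since the density of `ω` is at most `1`,
the near part is at most the Lebesgue integral of `|x - y| ^ (-s)` over `B(y, r)`, which scales as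
`r ^ (N - s)` and is finite because `s < N`. On the far part the kernel is at most `r ^ (-s)`, so
that part is at most `r ^ (-s) ω(E)`. With this choice of `r` both are multiples of
`ω(E) ^ ((N - s) / N)`, and `(N - s) / N = (p* - 1) / p*` for `s = N - 2α`.
-/

open MeasureTheory Metric Module
open scoped ENNReal

section
variable {V : Type*} [NormedAddCommGroup V] [MeasurableSpace V] [BorelSpace V]

theorem setLIntegral_ball_comp_sub (μ : Measure V) [μ.IsAddRightInvariant] (f : V → ℝ≥0∞)
    (y : V) (r : ℝ) :
    ∫⁻ x in ball y r, f (x - y) ∂μ = ∫⁻ x in ball 0 r, f x ∂μ := by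
  rw [← lintegral_indicator measurableSet_ball, ← lintegral_indicator measurableSet_ball]
  conv_rhs => rw [← lintegral_sub_right_eq_self _ y]
  congr 1 with x
  simp [Set.indicator, mem_ball, dist_eq_norm]

variable [NormedSpace ℝ V] [FiniteDimensional ℝ V] (μ : Measure V) [μ.IsAddHaarMeasure]

theorem setLIntegral_ball_zero_eq_mul_unitBall (f : V → ℝ≥0∞) (hf : Measurable f) {r : ℝ}
    (hr : 0 < r) :
    ∫⁻ x in ball 0 r, f x ∂μ
      = ENNReal.ofReal (r ^ finrank ℝ V) * ∫⁻ z in ball 0 1, f (r • z) ∂μ := by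
  have hball :
      (ball (0 : V) r).indicator f ∘ (r • ·) = (ball 0 1).indicator (f ∘ (r • ·)) := by
    ext z
    simp [Set.indicator, norm_smul, abs_of_pos hr, hr]
  have hscale : ∫⁻ z in ball 0 1, f (r • z) ∂μ
      = ENNReal.ofReal (r ^ finrank ℝ V)⁻¹ * ∫⁻ x in ball 0 r, f x ∂μ := by
    rw [← lintegral_indicator measurableSet_ball, ← lintegral_indicator measurableSet_ball]
    change ∫⁻ z, (ball 0 1).indicator (f ∘ (r • ·)) z ∂μ = _
    rw [← hball, lintegral_comp (hf.indicator measurableSet_ball) (measurable_const_smul r),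
      Measure.map_addHaar_smul μ hr.ne', lintegral_smul_measure, abs_of_pos (by positivity),
      smul_eq_mul]
  rw [hscale, ← mul_assoc, ← ENNReal.ofReal_mul (by positivity),
    mul_inv_cancel₀ (by positivity), ENNReal.ofReal_one, one_mul]

theorem setLIntegral_ball_norm_sub_rpow (y : V) {r : ℝ} (hr : 0 < r) (p : ℝ) :
    ∫⁻ x in ball y r, ENNReal.ofReal (‖x - y‖ ^ p) ∂μ
      = ENNReal.ofReal (r ^ (finrank ℝ V + p))
          * ∫⁻ z in ball 0 1, ENNReal.ofReal (‖z‖ ^ p) ∂μ := by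
  rw [setLIntegral_ball_comp_sub μ (fun x => ENNReal.ofReal (‖x‖ ^ p)),
    setLIntegral_ball_zero_eq_mul_unitBall μ _ (by fun_prop) hr]
  simp_rw [norm_smul, Real.norm_of_nonneg hr.le, Real.mul_rpow hr.le (norm_nonneg _),
    ENNReal.ofReal_mul (Real.rpow_nonneg hr.le p)]
  rw [lintegral_const_mul _ (by fun_prop), ← mul_assoc, ← ENNReal.ofReal_mul (by positivity),
    Real.rpow_add hr, Real.rpow_natCast]

theorem setLIntegral_unitBall_norm_rpow_lt_top (hd : 1 ≤ finrank ℝ V) {p : ℝ}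
    (hp : -(finrank ℝ V : ℝ) < p) :
    ∫⁻ z in ball 0 1, ENNReal.ofReal (‖z‖ ^ p) ∂μ < ∞ := by
  have hmeas : Measurable fun z : V => ‖z‖ ^ p := by fun_prop
  refine Integrable.lintegral_lt_top (integrableOn_ball_of_norm_le_rpow (C := 1) (α := -p) hd
    (by linarith) (ae_of_all _ fun z => ?_) hmeas.aestronglyMeasurable)
  rw [neg_neg, one_mul, Real.norm_of_nonneg (Real.rpow_nonneg (norm_nonneg z) p)]

variable {μ}

theorem setLIntegral_norm_sub_rpow_neg_le {ν : Measure V} (hν : ν ≤ μ) {s : ℝ} (hs : 0 ≤ s)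
    (S : Set V) (y : V) {r : ℝ} (hr : 0 < r) :
    ∫⁻ x in S, ENNReal.ofReal (‖x - y‖ ^ (-s)) ∂ν
      ≤ ENNReal.ofReal (r ^ (finrank ℝ V - s))
          * ∫⁻ z in ball 0 1, ENNReal.ofReal (‖z‖ ^ (-s)) ∂μ
        + ENNReal.ofReal (r ^ (-s)) * ν S := by
  have hfar :
      ∀ x ∈ S \ ball y r, ENNReal.ofReal (‖x - y‖ ^ (-s)) ≤ ENNReal.ofReal (r ^ (-s)) := by
    intro x hx
    have hrx : r ≤ ‖x - y‖ := by simpa [dist_eq_norm] using hx.2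
    exact ENNReal.ofReal_le_ofReal (Real.rpow_le_rpow_of_nonpos hr hrx (neg_nonpos.mpr hs))
  calc ∫⁻ x in S, ENNReal.ofReal (‖x - y‖ ^ (-s)) ∂ν
      = ∫⁻ x in S ∩ ball y r, ENNReal.ofReal (‖x - y‖ ^ (-s)) ∂ν
          + ∫⁻ x in S \ ball y r, ENNReal.ofReal (‖x - y‖ ^ (-s)) ∂ν :=
        (lintegral_inter_add_sdiff _ S measurableSet_ball).symm
    _ ≤ ∫⁻ x in ball y r, ENNReal.ofReal (‖x - y‖ ^ (-s)) ∂μ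
          + ∫⁻ _ in S \ ball y r, ENNReal.ofReal (r ^ (-s)) ∂ν :=
        add_le_add (lintegral_mono' (Measure.restrict_mono Set.inter_subset_right hν) le_rfl)
          (setLIntegral_mono measurable_const hfar)
    _ ≤ _ := by
        rw [setLIntegral_ball_norm_sub_rpow μ y hr, setLIntegral_const, ← sub_eq_add_neg]
        gcongr
        exact Set.sdiff_subset

theorem setLIntegral_norm_sub_rpow_neg_le_measure_rpow {ν : Measure V} (hν : ν ≤ μ) {s : ℝ}
    (hs : 0 ≤ s) (hsd : s < finrank ℝ V) (S : Set V) (y : V) :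
    ∫⁻ x in S, ENNReal.ofReal (‖x - y‖ ^ (-s)) ∂ν
      ≤ (∫⁻ z in ball 0 1, ENNReal.ofReal (‖z‖ ^ (-s)) ∂μ + 1)
          * ν S ^ ((finrank ℝ V - s) / finrank ℝ V) := by
  set d : ℝ := (finrank ℝ V : ℝ)
  have hd : 0 < d := hs.trans_lt hsd
  rcases eq_or_ne (ν S) 0 with hS0 | hS0
  · simp [Measure.restrict_eq_zero.mpr hS0]
  rcases eq_or_ne (ν S) ∞ with hStop | hStop
  · simp [hStop, ENNReal.top_rpow_of_pos (div_pos (sub_pos.mpr hsd) hd)]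
  have ht : 0 < (ν S).toReal := ENNReal.toReal_pos hS0 hStop
  have hpow : ∀ u : ℝ, ENNReal.ofReal (((ν S).toReal ^ d⁻¹) ^ u) = ν S ^ (u / d) := fun u => by
    rw [← Real.rpow_mul ht.le, ← ENNReal.ofReal_rpow_of_pos ht, ENNReal.ofReal_toReal hStop,
      inv_mul_eq_div]
  have hfar : ν S ^ (-s / d) * ν S = ν S ^ ((d - s) / d) := by
    rw [show (d - s) / d = -s / d + 1 by field_simp; ring, ENNReal.rpow_add _ _ hS0 hStop,
      ENNReal.rpow_one]
  calc _ ≤ _ := setLIntegral_norm_sub_rpow_neg_le hν hs S y (Real.rpow_pos_of_pos ht d⁻¹)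
    _ = _ := by rw [hpow, hpow, hfar, add_mul, one_mul, mul_comm]

end

theorem green_marcinkiewicz_pointwise (N : ℕ) (hN : 2 ≤ N) (α c : ℝ)
    (hα : α ∈ Set.Ioo (0:ℝ) 1) (hc : 0 < c) :
    ∃ C > 0, ∀ E : Set (EuclideanSpace ℝ (Fin N)), MeasurableSet E →
      ∀ y : EuclideanSpace ℝ (Fin N),
      (∫⁻ x in E, ENNReal.ofReal (c / ‖x - y‖ ^ ((N:ℝ) - 2*α))
          ∂((volume : Measure (EuclideanSpace ℝ (Fin N))).withDensity
            (fun x => ENNReal.ofReal ((1 + ‖x‖ ^ ((N:ℝ) + 2*α))⁻¹))))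
        ≤ ENNReal.ofReal C *
          (((volume : Measure (EuclideanSpace ℝ (Fin N))).withDensity
            (fun x => ENNReal.ofReal ((1 + ‖x‖ ^ ((N:ℝ) + 2*α))⁻¹))) E)
            ^ (((N:ℝ) / ((N:ℝ) - 2*α) - 1) / ((N:ℝ) / ((N:ℝ) - 2*α))) := by
  obtain ⟨hα0, hα1⟩ := hα
  have hN' : (2 : ℝ) ≤ N := by exact_mod_cast hN
  have hdim : (finrank ℝ (EuclideanSpace ℝ (Fin N)) : ℝ) = N := by
    rw [finrank_euclideanSpace_fin]
  set K := ∫⁻ z in ball (0 : EuclideanSpace ℝ (Fin N)) 1, ENNReal.ofReal (‖z‖ ^ (-(N - 2 * α)))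
  have hK : K ≠ ∞ := (setLIntegral_unitBall_norm_rpow_lt_top volume
    (by rw [finrank_euclideanSpace_fin]; omega) (by rw [hdim]; linarith)).ne
  have hω : (volume : Measure (EuclideanSpace ℝ (Fin N))).withDensity
      (fun x => ENNReal.ofReal ((1 + ‖x‖ ^ ((N:ℝ) + 2*α))⁻¹)) ≤ volume := by
    refine (withDensity_mono (ae_of_all _ fun x => ?_)).trans_eq withDensity_one
    exact ENNReal.ofReal_le_one.mpr
      (inv_le_one_of_one_le₀ (le_add_of_nonneg_right (Real.rpow_nonneg (norm_nonneg x) _)))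
  have hexp : ((N:ℝ) / ((N:ℝ) - 2*α) - 1) / ((N:ℝ) / ((N:ℝ) - 2*α))
      = (finrank ℝ (EuclideanSpace ℝ (Fin N)) - (N - 2 * α))
          / finrank ℝ (EuclideanSpace ℝ (Fin N)) := by
    have hs : (N : ℝ) - 2 * α ≠ 0 := by linarith
    rw [hdim]
    field_simp
  refine ⟨c * (K + 1).toReal, mul_pos hc (ENNReal.toReal_pos (by simp) (by simp [hK])),
    fun E _ y => ?_⟩
  have hG : ∀ x, ENNReal.ofReal (c / ‖x - y‖ ^ ((N:ℝ) - 2*α))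
      = ENNReal.ofReal c * ENNReal.ofReal (‖x - y‖ ^ (-(N - 2 * α))) := fun x => by
    rw [Real.rpow_neg (norm_nonneg _), div_eq_mul_inv, ENNReal.ofReal_mul hc.le]
  simp_rw [hG]
  rw [lintegral_const_mul _ (by fun_prop), ENNReal.ofReal_mul hc.le,
    ENNReal.ofReal_toReal (by simp [hK]), mul_assoc, hexp]
  gcongr
  exact setLIntegral_norm_sub_rpow_neg_le_measure_rpow hω (by linarith) (by rw [hdim]; linarith) E y
end

section
/- Let N ≥ 2, α ∈ (0,1), τ < -N, and for x with |x| ≥ 4 let e = x/|x|, D₁ = B_{1/2}(-e) \ B_{1/|x|}(-e), and I(y) = |e+y|^τ + |e-y|^τ - 2. Then there exist R ≥ 4 and c > 1 such that for |x| ≥ R, c^{-1}|x|^{-N-τ} ≤ ∫_{D₁} I(y)/|y|^{N+2α} dy ≤ c |x|^{-N-τ}. -/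
/-!
On the annulus `D₁ = B_{1/2}(-e) \ B_r(-e)` one has `1/2 < ‖y‖ < 3/2` and `‖e - y‖ ≥ 3/2`,
while `‖e + y‖ < 1/2` forces `‖e + y‖ ^ τ ≥ 4` because `τ ≤ -2`. Hence `I(y) / ‖y‖ ^ (N + 2α)` is
bounded above and below by constant multiples of `‖e + y‖ ^ τ`. In polar coordinates,
`∫_{D₁} ‖e + y‖ ^ τ = C ((1/2) ^ (N + τ) - r ^ (N + τ)) / (N + τ)`, which is comparable to
`r ^ (N + τ)` since `N + τ < 0` and `r ≤ 1/4`. With `r = ‖x‖⁻¹` this is `‖x‖ ^ (-N - τ)`.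
-/

open MeasureTheory Metric Set

theorem rpow_sub_div_mem_Icc {σ r R : ℝ} (hσ : σ < 0) (hr : 0 < r) (hrR : 2 * r ≤ R) :
    (R ^ σ - r ^ σ) / σ ∈ Icc ((1 - 2 ^ σ) / -σ * r ^ σ) (r ^ σ / -σ) := by
  have hR : R ^ σ ≤ 2 ^ σ * r ^ σ := by
    rw [← Real.mul_rpow zero_le_two hr.le]
    exact Real.rpow_le_rpow_of_nonpos (by positivity) hrR hσ.le
  have hR₀ : 0 ≤ R ^ σ := Real.rpow_nonneg (by linarith) σ
  have hσ' : 0 ≤ -σ := by linarith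
  rw [← neg_div_neg_eq (R ^ σ - r ^ σ), neg_sub, div_mul_eq_mul_div, sub_mul, one_mul]
  exact ⟨div_le_div_of_nonneg_right (by linarith) hσ',
    div_le_div_of_nonneg_right (by linarith) hσ'⟩

theorem exists_one_lt_inv_le_and_le {k₁ : ℝ} (hk₁ : 0 < k₁) (k₂ : ℝ) :
    ∃ c > 1, c⁻¹ ≤ k₁ ∧ k₂ ≤ c := by
  refine ⟨max (max k₂ k₁⁻¹) 2, by simp, ?_, le_max_of_le_left (le_max_left _ _)⟩
  rw [inv_le_comm₀ (by positivity) hk₁]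
  exact le_max_of_le_left (le_max_right _ _)

section Annulus

variable {E : Type*} [NormedAddCommGroup E] [NormedSpace ℝ E] [FiniteDimensional ℝ E]
  [Nontrivial E] [MeasurableSpace E] [BorelSpace E] (μ : Measure E) [μ.IsAddHaarMeasure]
  {r R τ : ℝ}

local notation "d" => (Module.finrank ℝ E : ℝ)

theorem setIntegral_ball_diff_ball_norm_rpow (hr : 0 < r) (hrR : r ≤ R) (hτ : d + τ ≠ 0) :
    ∫ z in ball (0 : E) R \ ball 0 r, ‖z‖ ^ τ ∂μ =
      d * μ.real (ball 0 1) * ((R ^ (d + τ) - r ^ (d + τ)) / (d + τ)) := by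
  have hpre : (‖·‖) ⁻¹' Ico r R = ball (0 : E) R \ ball 0 r := by
    ext z; simp [and_comm]
  have hd : 1 ≤ Module.finrank ℝ E := Module.finrank_pos
  have hradial : ∫ t in Ioi (0 : ℝ), t ^ (Module.finrank ℝ E - 1) • (Ico r R).indicator (· ^ τ) t
      = ∫ t in r..R, t ^ (d + τ - 1) := by
    simp_rw [← indicator_smul_apply (Ico r R) (fun t : ℝ => t ^ (Module.finrank ℝ E - 1))]
    rw [integral_indicator measurableSet_Ico, Measure.restrict_restrict measurableSet_Ico,
      inter_eq_self_of_subset_left (Ico_subset_Ici_self.trans (Ici_subset_Ioi.2 hr)),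
      intervalIntegral.integral_of_le hrR, integral_Ico_eq_integral_Ioo,
      integral_Ioc_eq_integral_Ioo]
    refine setIntegral_congr_fun measurableSet_Ioo fun t ht => ?_
    have ht₀ : 0 < t := hr.trans ht.1
    rw [smul_eq_mul, add_sub_right_comm, Real.rpow_add ht₀, Real.rpow_sub_one ht₀.ne',
      ← Real.rpow_natCast, Nat.cast_sub hd, Nat.cast_one, Real.rpow_sub_one ht₀.ne']
  have hpolar := integral_fun_norm_addHaar μ ((Ico r R).indicator (· ^ τ))
  rw [hradial, integral_rpow (.inr ⟨fun h => hτ (by linarith), ?_⟩), sub_add_cancel] at hpolar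
  · rw [← hpre, ← integral_indicator (measurableSet_Ico.preimage continuous_norm.measurable)]
    convert hpolar using 1
    · rfl
    · rw [nsmul_eq_mul, smul_eq_mul, mul_assoc]
  · rw [uIcc_of_le hrR]
    exact fun h => hr.not_ge h.1

theorem setIntegral_ball_diff_ball_norm_sub_rpow (c : E) (hr : 0 < r) (hrR : r ≤ R)
    (hτ : d + τ ≠ 0) :
    ∫ y in ball c R \ ball c r, ‖y - c‖ ^ τ ∂μ =
      d * μ.real (ball 0 1) * ((R ^ (d + τ) - r ^ (d + τ)) / (d + τ)) := by
  have hpre : (· - c) ⁻¹' (ball (0 : E) R \ ball 0 r) = ball c R \ ball c r := by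
    ext y; simp [dist_eq_norm]
  rw [← setIntegral_ball_diff_ball_norm_rpow μ hr hrR hτ, ← hpre]
  exact (measurePreserving_sub_right μ c).setIntegral_preimage_emb
    (MeasurableEquiv.subRight c).measurableEmbedding (‖·‖ ^ τ) _

end Annulus

section SecondDifference

variable {E : Type*} [NormedAddCommGroup E]

theorem mem_ball_neg_iff {e y : E} {ρ : ℝ} : y ∈ ball (-e) ρ ↔ ‖e + y‖ < ρ := by
  rw [mem_ball_iff_norm, sub_neg_eq_add, add_comm]

/-- The paper's `I(y)`: for a unit vector `e`, the second difference of `‖·‖ ^ τ` at `e`. -/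
noncomputable def normRpowSecondDiff (τ : ℝ) (e y : E) : ℝ := ‖e + y‖ ^ τ + ‖e - y‖ ^ τ - 2

variable [NormedSpace ℝ E] {τ p : ℝ} {e y : E}

theorem normRpowSecondDiff_mem_Icc (he : ‖e‖ = 1) (hτ : τ ≤ -2) (hy₀ : 0 < ‖e + y‖)
    (hy : ‖e + y‖ < 1 / 2) :
    normRpowSecondDiff τ e y ∈ Icc (‖e + y‖ ^ τ / 2) (‖e + y‖ ^ τ) := by
  have hfar : 1 ≤ ‖e - y‖ := by
    have h := norm_sub_norm_le ((2 : ℝ) • e) (e + y)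
    rw [show (2 : ℝ) • e - (e + y) = e - y by rw [two_smul]; abel, norm_smul, he] at h
    norm_num at h
    linarith
  have hnear : 4 ≤ ‖e + y‖ ^ τ :=
    calc (4 : ℝ) = (1 / 2) ^ (-2 : ℝ) := by norm_num
      _ ≤ (1 / 2) ^ τ := Real.rpow_le_rpow_of_exponent_ge (by norm_num) (by norm_num) hτ
      _ ≤ ‖e + y‖ ^ τ := Real.rpow_le_rpow_of_nonpos hy₀ hy.le (by linarith)
  have hfar_pos : 0 < ‖e - y‖ ^ τ := Real.rpow_pos_of_pos (by linarith) τ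
  have hfar_le : ‖e - y‖ ^ τ ≤ 1 := Real.rpow_le_one_of_one_le_of_nonpos hfar (by linarith)
  unfold normRpowSecondDiff
  constructor <;> linarith

theorem normRpowSecondDiff_div_mem_Icc (he : ‖e‖ = 1) (hτ : τ ≤ -2) (hp : 0 ≤ p)
    (hy₀ : 0 < ‖e + y‖) (hy : ‖e + y‖ < 1 / 2) :
    normRpowSecondDiff τ e y / ‖y‖ ^ p ∈
      Icc (‖e + y‖ ^ τ / (2 * (3 / 2) ^ p)) (2 ^ p * ‖e + y‖ ^ τ) := by
  have hy_lower : 1 / 2 < ‖y‖ := by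
    have := abs_norm_sub_norm_le (e + y) e
    rw [add_sub_cancel_left, he] at this
    linarith [neg_abs_le (‖e + y‖ - 1)]
  have hy_upper : ‖y‖ < 3 / 2 := by
    have := norm_sub_le (e + y) e
    rw [add_sub_cancel_left, he] at this
    linarith
  obtain ⟨hI_lower, hI_upper⟩ := normRpowSecondDiff_mem_Icc he hτ hy₀ hy
  have hdenom : 0 < ‖y‖ ^ p := Real.rpow_pos_of_pos (by linarith) p
  constructor
  · rw [← div_div]
    exact div_le_div₀ (by linarith [Real.rpow_pos_of_pos hy₀ τ]) hI_lower hdenom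
      (Real.rpow_le_rpow (norm_nonneg y) hy_upper.le hp)
  · rw [div_le_iff₀ hdenom, mul_comm (2 ^ p), mul_assoc,
      ← Real.mul_rpow zero_le_two (norm_nonneg y)]
    calc normRpowSecondDiff τ e y ≤ ‖e + y‖ ^ τ := hI_upper
      _ ≤ ‖e + y‖ ^ τ * (2 * ‖y‖) ^ p := le_mul_of_one_le_right (by positivity)
          (Real.one_le_rpow (by linarith) hp)

theorem setIntegral_normRpowSecondDiff_div_mem_Icc [MeasurableSpace E] [BorelSpace E]
    [ProperSpace E] (μ : Measure E) [IsFiniteMeasureOnCompacts μ] {r : ℝ} (he : ‖e‖ = 1)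
    (hr : 0 < r) (hτ : τ ≤ -2) (hp : 0 ≤ p) :
    ∫ y in ball (-e) (1 / 2) \ ball (-e) r, normRpowSecondDiff τ e y / ‖y‖ ^ p ∂μ ∈
      Icc ((∫ y in ball (-e) (1 / 2) \ ball (-e) r, ‖e + y‖ ^ τ ∂μ) / (2 * (3 / 2) ^ p))
        (2 ^ p * ∫ y in ball (-e) (1 / 2) \ ball (-e) r, ‖e + y‖ ^ τ ∂μ) := by
  set A := ball (-e) (1 / 2) \ ball (-e) r
  have hA : MeasurableSet A := measurableSet_ball.diff measurableSet_ball
  have hnorm : ∀ y ∈ A, r ≤ ‖e + y‖ ∧ ‖e + y‖ < 1 / 2 := fun y hy =>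
    ⟨not_lt.1 (mem_ball_neg_iff.not.1 hy.2), mem_ball_neg_iff.1 hy.1⟩
  have hpointwise : ∀ y ∈ A, normRpowSecondDiff τ e y / ‖y‖ ^ p ∈
      Icc (‖e + y‖ ^ τ / (2 * (3 / 2) ^ p)) (2 ^ p * ‖e + y‖ ^ τ) := fun y hy =>
    normRpowSecondDiff_div_mem_Icc he hτ hp (hr.trans_le (hnorm y hy).1) (hnorm y hy).2
  have hg : IntegrableOn (fun y => ‖e + y‖ ^ τ) A μ := by
    refine IntegrableOn.of_bound ((measure_mono sdiff_subset).trans_lt measure_ball_lt_top)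
      (by fun_prop : Measurable fun y => ‖e + y‖ ^ τ).aestronglyMeasurable (r ^ τ)
      ((ae_restrict_iff' hA).2 (.of_forall fun y hy => ?_))
    rw [Real.norm_of_nonneg (by positivity)]
    exact Real.rpow_le_rpow_of_nonpos hr (hnorm y hy).1 (by linarith)
  have hf : IntegrableOn (fun y => normRpowSecondDiff τ e y / ‖y‖ ^ p) A μ := by
    refine (hg.const_mul (2 ^ p)).mono' (by unfold normRpowSecondDiff; fun_prop :
      Measurable fun y => normRpowSecondDiff τ e y / ‖y‖ ^ p).aestronglyMeasurable
      ((ae_restrict_iff' hA).2 (.of_forall fun y hy => ?_))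
    rw [Real.norm_of_nonneg ((by positivity : (0 : ℝ) ≤ _).trans (hpointwise y hy).1)]
    exact (hpointwise y hy).2
  constructor
  · rw [← integral_div]
    exact setIntegral_mono_on (hg.div_const _) hf hA fun y hy => (hpointwise y hy).1
  · rw [← integral_const_mul]
    exact setIntegral_mono_on hf (hg.const_mul _) hA fun y hy => (hpointwise y hy).2

theorem exists_setIntegral_normRpowSecondDiff_div_mem_Icc [FiniteDimensional ℝ E]
    [Nontrivial E] [MeasurableSpace E] [BorelSpace E] (μ : Measure E) [μ.IsAddHaarMeasure]
    (hτ : τ < -Module.finrank ℝ E) (hτ₂ : τ ≤ -2) (hp : 0 ≤ p) :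
    ∃ k₁ > 0, ∃ k₂ : ℝ, ∀ e : E, ‖e‖ = 1 → ∀ r : ℝ, 0 < r → r ≤ 1 / 4 →
      ∫ y in ball (-e) (1 / 2) \ ball (-e) r, normRpowSecondDiff τ e y / ‖y‖ ^ p ∂μ ∈
        Icc (k₁ * r ^ (Module.finrank ℝ E + τ)) (k₂ * r ^ (Module.finrank ℝ E + τ)) := by
  set σ := Module.finrank ℝ E + τ
  have hσ : σ < 0 := by linarith
  set C := Module.finrank ℝ E * μ.real (ball (0 : E) 1)
  have hC : 0 < C := mul_pos (by exact_mod_cast Module.finrank_pos)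
    (ENNReal.toReal_pos (measure_ball_pos μ 0 one_pos).ne' measure_ball_lt_top.ne)
  have h2σ : 2 ^ σ < (1 : ℝ) := Real.rpow_lt_one_of_one_lt_of_neg one_lt_two hσ
  refine ⟨C * ((1 - 2 ^ σ) / -σ) / (2 * (3 / 2) ^ p),
    div_pos (mul_pos hC (div_pos (by linarith) (by linarith))) (by positivity),
    2 ^ p * (C / -σ), fun e he r hr hr₄ => ?_⟩
  have hJ : ∫ y in ball (-e) (1 / 2) \ ball (-e) r, ‖e + y‖ ^ τ ∂μ =
      C * (((1 / 2) ^ σ - r ^ σ) / σ) := by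
    rw [← setIntegral_ball_diff_ball_norm_sub_rpow μ (-e) hr (by linarith) hσ.ne]
    simp_rw [sub_neg_eq_add, add_comm e]
  obtain ⟨hQ₁, hQ₂⟩ := rpow_sub_div_mem_Icc hσ hr (by linarith : 2 * r ≤ 1 / 2)
  obtain ⟨hF₁, hF₂⟩ := setIntegral_normRpowSecondDiff_div_mem_Icc μ he hr hτ₂ hp
  rw [hJ] at hF₁ hF₂
  constructor
  · calc C * ((1 - 2 ^ σ) / -σ) / (2 * (3 / 2) ^ p) * r ^ σ
        = C * ((1 - 2 ^ σ) / -σ * r ^ σ) / (2 * (3 / 2) ^ p) := by ring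
      _ ≤ C * (((1 / 2) ^ σ - r ^ σ) / σ) / (2 * (3 / 2) ^ p) := by gcongr
      _ ≤ _ := hF₁
  · calc _ ≤ 2 ^ p * (C * (((1 / 2) ^ σ - r ^ σ) / σ)) := hF₂
      _ ≤ 2 ^ p * (C * (r ^ σ / -σ)) := by gcongr
      _ = 2 ^ p * (C / -σ) * r ^ σ := by ring

end SecondDifference

theorem annulus_integral_estimate (N : ℕ) (hN : 2 ≤ N) (α τ : ℝ)
    (hα : α ∈ Set.Ioo (0:ℝ) 1) (hτ : τ < -(N:ℝ)) :
    ∃ R : ℝ, 4 ≤ R ∧ ∃ c > 1, ∀ x : EuclideanSpace ℝ (Fin N), R ≤ ‖x‖ →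
      c⁻¹ * ‖x‖ ^ (-(N:ℝ) - τ) ≤
        (∫ y in Metric.ball (-(‖x‖⁻¹ • x)) (1/2) \ Metric.ball (-(‖x‖⁻¹ • x)) ‖x‖⁻¹,
          (‖(‖x‖⁻¹ • x) + y‖ ^ τ + ‖(‖x‖⁻¹ • x) - y‖ ^ τ - 2) / ‖y‖ ^ ((N:ℝ) + 2*α)) ∧
      (∫ y in Metric.ball (-(‖x‖⁻¹ • x)) (1/2) \ Metric.ball (-(‖x‖⁻¹ • x)) ‖x‖⁻¹,
          (‖(‖x‖⁻¹ • x) + y‖ ^ τ + ‖(‖x‖⁻¹ • x) - y‖ ^ τ - 2) / ‖y‖ ^ ((N:ℝ) + 2*α))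
        ≤ c * ‖x‖ ^ (-(N:ℝ) - τ) := by
  have : Nonempty (Fin N) := ⟨⟨0, by omega⟩⟩
  have hN₂ : (2 : ℝ) ≤ N := by exact_mod_cast hN
  obtain ⟨k₁, hk₁, k₂, hbounds⟩ := exists_setIntegral_normRpowSecondDiff_div_mem_Icc
    (volume : Measure (EuclideanSpace ℝ (Fin N))) (p := N + 2 * α)
    (by rwa [finrank_euclideanSpace_fin]) (by linarith) (by linarith [hα.1])
  obtain ⟨c, hc, hck₁, hck₂⟩ := exists_one_lt_inv_le_and_le hk₁ k₂
  refine ⟨4, le_rfl, c, hc, fun x hx => ?_⟩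
  have hx₀ : 0 < ‖x‖ := by linarith
  have he : ‖‖x‖⁻¹ • x‖ = 1 := by rw [norm_smul, norm_inv, norm_norm, inv_mul_cancel₀ hx₀.ne']
  have hr : (‖x‖⁻¹) ^ (Module.finrank ℝ (EuclideanSpace ℝ (Fin N)) + τ) =
      ‖x‖ ^ (-(N : ℝ) - τ) := by
    rw [finrank_euclideanSpace_fin, Real.inv_rpow hx₀.le, ← Real.rpow_neg hx₀.le, neg_add']
  obtain ⟨hlow, hup⟩ :=
    hbounds _ he _ (inv_pos.2 hx₀) (inv_le_of_inv_le₀ (by norm_num) (by linarith))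
  rw [hr] at hlow hup
  exact ⟨(mul_le_mul_of_nonneg_right hck₁ (by positivity)).trans hlow,
    hup.trans (mul_le_mul_of_nonneg_right hck₂ (by positivity))⟩
end
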